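/- arXiv:1707.09368 — 4 statements merged into one kernel-verified Lean document; each statement's English description precedes it below -/
import Mathlib

section
/- (q-Lucas theorem) Let p be a prime and let ζ be a primitive p-th root of unity in ℂ. Let N, R be natural numbers written as N = N_0 + p·N_1 and R = R_0 + p·R_1 with 0 ≤ N_0 ≤ p-1 and 0 ≤ R_0 ≤ p-1. Then the Gaussian binomial coefficient [N, R]_q evaluated at q = ζ equals [N_0, R_0]_ζ · C(N_1, R_1), where [N_0, R_0]_ζ is the Gaussian binomial evaluated at ζ and C(N_1, R_1) is the ordinary binomial coefficient. -/
/-- The Gaussian binomial coefficient `[n, r]_q` as a polynomial in `q` with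
integer coefficients, defined by the `q`-Pascal recursion
`[n+1, r+1] = [n, r] + q^(r+1) · [n, r+1]`. -/
noncomputable def gaussBinomial : ℕ → ℕ → Polynomial ℤ
  | _, 0 => 1
  | 0, _ + 1 => 0
  | n + 1, r + 1 =>
      gaussBinomial n r + Polynomial.X ^ (r + 1) * gaussBinomial n (r + 1)

/-!
At a primitive `p`-th root of unity `ζ`, the absorption identity
`[p, r + 1] (q^(r+1) - 1) = [p, r] (q^(p-r) - 1)` forces `[p, r]_ζ = 0` for `0 < r < p`.
Feeding this and `ζ^p = 1` into the `q`-Pascal recursion gives `[n + p, r]_ζ = [n, r]_ζ` for `r < p`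
and `[n + p, r + p]_ζ = [n, r]_ζ + [n, r + p]_ζ`: shifting by `p` acts as the ordinary Pascal rule
on the quotients by `p`, so induction on `N₁` produces `C(N₁, R₁)`.
-/

open Polynomial

@[simp]
lemma gaussBinomial_zero_right (n : ℕ) : gaussBinomial n 0 = 1 := by
  cases n <;> rfl

@[simp]
lemma gaussBinomial_zero_succ (r : ℕ) : gaussBinomial 0 (r + 1) = 0 := rfl

lemma gaussBinomial_succ_succ (n r : ℕ) :
    gaussBinomial (n + 1) (r + 1) = gaussBinomial n r + X ^ (r + 1) * gaussBinomial n (r + 1) :=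
  rfl

lemma gaussBinomial_eq_zero_of_lt {n r : ℕ} (h : n < r) : gaussBinomial n r = 0 := by
  induction n generalizing r with
  | zero => obtain ⟨r, rfl⟩ := Nat.exists_eq_succ_of_ne_zero h.ne'; rfl
  | succ n ih =>
    obtain ⟨r, rfl⟩ := Nat.exists_eq_succ_of_ne_zero (Nat.ne_zero_of_lt h)
    rw [gaussBinomial_succ_succ, ih (by omega), ih (by omega), mul_zero, add_zero]

@[simp]
lemma gaussBinomial_self (n : ℕ) : gaussBinomial n n = 1 := by
  induction n with
  | zero => rfl
  | succ n ih => rw [gaussBinomial_succ_succ, ih, gaussBinomial_eq_zero_of_lt n.lt_succ_self]; ring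

/-- The `q`-analogue of `Nat.choose_succ_right_eq`. -/
lemma gaussBinomial_succ_right_eq (n r : ℕ) :
    gaussBinomial n (r + 1) * (X ^ (r + 1) - 1) = gaussBinomial n r * (X ^ (n - r) - 1) := by
  induction n generalizing r with
  | zero => cases r <;> simp
  | succ n ih =>
    cases r with
    | zero =>
      have h := ih 0
      simp only [gaussBinomial_zero_right, one_mul, Nat.sub_zero] at h ⊢
      rw [gaussBinomial_succ_succ, gaussBinomial_zero_right]
      linear_combination (X : ℤ[X]) * h
    | succ s =>
      rcases lt_or_ge s n with hs | hs
      · obtain ⟨m, rfl⟩ := Nat.exists_eq_add_of_lt hs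
        have h₀ := ih s
        have h₁ := ih (s + 1)
        rw [show s + m + 1 - s = m + 1 by omega] at h₀
        rw [show s + m + 1 - (s + 1) = m by omega] at h₁
        rw [show s + m + 1 + 1 - (s + 1) = m + 1 by omega,
          gaussBinomial_succ_succ (s + m + 1) (s + 1), gaussBinomial_succ_succ (s + m + 1) s]
        linear_combination (X : ℤ[X]) ^ (s + 2) * h₁ + h₀
      · rw [gaussBinomial_eq_zero_of_lt (by omega : n + 1 < s + 1 + 1)]
        rcases hs.eq_or_lt with rfl | hs
        · simp
        · rw [gaussBinomial_eq_zero_of_lt (by omega : n + 1 < s + 1), zero_mul, zero_mul]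

section Evaluation

variable {A : Type*} [CommRing A]

lemma aeval_gaussBinomial_succ_succ (ζ : A) (n r : ℕ) :
    aeval ζ (gaussBinomial (n + 1) (r + 1)) =
      aeval ζ (gaussBinomial n r) + ζ ^ (r + 1) * aeval ζ (gaussBinomial n (r + 1)) := by
  simp only [gaussBinomial_succ_succ, map_add, map_mul, map_pow, aeval_X]

variable [IsDomain A] {p : ℕ} {ζ : A}

namespace IsPrimitiveRoot

lemma aeval_gaussBinomial_eq_zero (hζ : IsPrimitiveRoot ζ p) {r : ℕ} (hr₀ : r ≠ 0)
    (hrp : r < p) : aeval ζ (gaussBinomial p r) = 0 := by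
  obtain ⟨r, rfl⟩ := Nat.exists_eq_succ_of_ne_zero hr₀
  have hζr : ζ ^ (r + 1) - 1 ≠ 0 := sub_ne_zero.2 (hζ.pow_ne_one_of_pos_of_lt r.succ_ne_zero hrp)
  have hrhs : aeval ζ (gaussBinomial p r) * (ζ ^ (p - r) - 1) = 0 := by
    cases r with
    | zero => simp [hζ.pow_eq_one]
    | succ r => rw [aeval_gaussBinomial_eq_zero hζ r.succ_ne_zero (by omega), zero_mul]
  have key := congrArg (aeval ζ) (gaussBinomial_succ_right_eq p r)
  simp only [map_mul, map_sub, map_pow, aeval_X, map_one] at key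
  exact (mul_eq_zero.1 (key.trans hrhs)).resolve_right hζr

lemma aeval_gaussBinomial_add_left (hζ : IsPrimitiveRoot ζ p) (n : ℕ) {r : ℕ} (hr : r < p) :
    aeval ζ (gaussBinomial (n + p) r) = aeval ζ (gaussBinomial n r) := by
  induction n generalizing r with
  | zero =>
    cases r with
    | zero => simp
    | succ r => rw [zero_add, hζ.aeval_gaussBinomial_eq_zero r.succ_ne_zero hr]; simp
  | succ n ih =>
    cases r with
    | zero => simp
    | succ r =>
      rw [add_right_comm, aeval_gaussBinomial_succ_succ, aeval_gaussBinomial_succ_succ,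
        ih (by omega), ih hr]

lemma aeval_gaussBinomial_add_add (hζ : IsPrimitiveRoot ζ p) (hp : p ≠ 0) (n r : ℕ) :
    aeval ζ (gaussBinomial (n + p) (r + p)) =
      aeval ζ (gaussBinomial n r) + aeval ζ (gaussBinomial n (r + p)) := by
  induction n generalizing r with
  | zero =>
    cases r with
    | zero => simp [gaussBinomial_eq_zero_of_lt (Nat.pos_of_ne_zero hp)]
    | succ r => simp [gaussBinomial_eq_zero_of_lt (by omega : p < r + 1 + p),
        gaussBinomial_eq_zero_of_lt (by omega : 0 < r + 1 + p)]
  | succ n ih =>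
    cases r with
    | zero =>
      obtain ⟨t, rfl⟩ := Nat.exists_eq_succ_of_ne_zero hp
      have h := ih 0
      rw [zero_add] at h ⊢
      rw [add_right_comm n 1, aeval_gaussBinomial_succ_succ, aeval_gaussBinomial_succ_succ, h,
        hζ.aeval_gaussBinomial_add_left n t.lt_succ_self, hζ.pow_eq_one]
      simp only [gaussBinomial_zero_right, map_one]
      ring
    | succ r =>
      rw [add_right_comm n, add_right_comm r, aeval_gaussBinomial_succ_succ,
        aeval_gaussBinomial_succ_succ, aeval_gaussBinomial_succ_succ, add_right_comm r p 1, ih, ih,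
        pow_add _ (r + 1) p, hζ.pow_eq_one]
      ring

lemma aeval_gaussBinomial_add_mul (hζ : IsPrimitiveRoot ζ p) {N₀ R₀ : ℕ} (hN₀ : N₀ < p)
    (hR₀ : R₀ < p) (N₁ R₁ : ℕ) :
    aeval ζ (gaussBinomial (N₀ + p * N₁) (R₀ + p * R₁)) =
      aeval ζ (gaussBinomial N₀ R₀) * (N₁.choose R₁ : A) := by
  induction N₁ generalizing R₁ with
  | zero =>
    cases R₁ with
    | zero => simp
    | succ R₁ =>
      rw [gaussBinomial_eq_zero_of_lt (by nlinarith), Nat.choose_zero_succ]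
      simp
  | succ N₁ ih =>
    rw [mul_add_one, ← add_assoc]
    cases R₁ with
    | zero =>
      simpa using (hζ.aeval_gaussBinomial_add_left _ hR₀).trans (ih 0)
    | succ R₁ =>
      rw [mul_add_one, ← add_assoc, hζ.aeval_gaussBinomial_add_add (by omega), ih, add_assoc,
        ← mul_add_one, ih, Nat.choose_succ_succ']
      push_cast
      ring

end IsPrimitiveRoot

end Evaluation

theorem q_lucas_general (p : ℕ) (ζ : ℂ) (hζ : IsPrimitiveRoot ζ p)
    (N R N₀ N₁ R₀ R₁ : ℕ) (hN : N = N₀ + p * N₁) (hR : R = R₀ + p * R₁)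
    (hN₀ : N₀ < p) (hR₀ : R₀ < p) :
    Polynomial.aeval ζ (gaussBinomial N R) =
      Polynomial.aeval ζ (gaussBinomial N₀ R₀) * (N₁.choose R₁ : ℂ) := by
  subst hN hR
  exact hζ.aeval_gaussBinomial_add_mul hN₀ hR₀ N₁ R₁

/-- **q-Lucas theorem.** If `ζ` is a primitive `p`-th root of unity in `ℂ`
(`p` prime), `N = N₀ + p·N₁`, `R = R₀ + p·R₁` with `N₀, R₀ < p`, then the
Gaussian binomial `[N, R]` evaluated at `ζ` equals `[N₀, R₀]_ζ · C(N₁, R₁)`. -/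
theorem q_lucas (p : ℕ) (hp : p.Prime) (ζ : ℂ) (hζ : IsPrimitiveRoot ζ p)
    (N R N₀ N₁ R₀ R₁ : ℕ) (hN : N = N₀ + p * N₁) (hR : R = R₀ + p * R₁)
    (hN₀ : N₀ < p) (hR₀ : R₀ < p) :
    Polynomial.aeval ζ (gaussBinomial N R) =
      Polynomial.aeval ζ (gaussBinomial N₀ R₀) * (N₁.choose R₁ : ℂ) :=
  q_lucas_general p ζ hζ N R N₀ N₁ R₀ R₁ hN hR hN₀ hR₀
end

section
/- (Fine–Herstein) Let F_q be a finite field with q elements and let n ≥ 1. The number of nilpotent n × n matrices over F_q equals q^{n² - n}. -/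
/-!
Fitting's lemma: an endomorphism `f` of an `n`-dimensional space `V` is the same thing as a
decomposition `V = U ⊕ W` (namely `U = range f^n`, `W = ker f^n`) together with an automorphism
of `U` and a nilpotent endomorphism of `W`. Writing `ν_j` for the number of nilpotent `j × j`
matrices and `c_j` for the number of decompositions with `dim W = j`, this gives
`q^(n²) = ∑ⱼ c_j |GL_(n-j)| ν_j`. An isomorphism `K^(n-j) × K^j ≃ V` is in the same way a
decomposition together with isomorphisms `K^(n-j) ≃ U` and `K^j ≃ W`, so
`c_j |GL_(n-j)| |GL_j| = |GL_n|`, and the count becomes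
`q^(n²) / |GL_n| = ∑_{j ≤ n} ν_j / |GL_j|`. Subtracting this identity for `n - 1` and using
`|GL_n| = q^(n-1) (q^n - 1) |GL_(n-1)|` leaves `ν_n = q^(n² - n)`.
-/

open Module LinearMap Function
open scoped Finset

lemma Matrix.pow_card_eq_zero_of_isNilpotent {R ι : Type*} [CommRing R] [IsDomain R] [Fintype ι]
    [DecidableEq ι] {A : Matrix ι ι R} (hA : IsNilpotent A) : A ^ Fintype.card ι = 0 := by
  have hchar := (Matrix.isNilpotent_charpoly_sub_pow_of_isNilpotent hA).eq_zero
  rw [sub_eq_zero] at hchar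
  simpa [hchar] using A.aeval_self_charpoly

namespace FineHerstein

instance finite_linearMap {R M N : Type*} [Semiring R] [AddCommMonoid M] [Module R M]
    [AddCommMonoid N] [Module R N] [Finite M] [Finite N] : Finite (M →ₗ[R] N) :=
  Finite.of_injective _ DFunLike.coe_injective

instance finite_linearEquiv {R M N : Type*} [Semiring R] [AddCommMonoid M] [Module R M]
    [AddCommMonoid N] [Module R N] [Finite M] [Finite N] : Finite (M ≃ₗ[R] N) :=
  Finite.of_injective _ DFunLike.coe_injective

abbrev ComplPair (R M : Type*) [Semiring R] [AddCommMonoid M] [Module R M] :=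
  {p : Submodule R M × Submodule R M // IsCompl p.1 p.2}

section Invariant

variable {R M : Type*} [Semiring R] [AddCommMonoid M] [Module R M]

lemma apply_mem_ker_pow (f : End R M) (m : ℕ) : ∀ x ∈ ker (f ^ m), f x ∈ ker (f ^ m) := by
  intro x hx
  rw [mem_ker] at hx ⊢
  rw [← Module.End.mul_apply, ← (Commute.self_pow f m).eq, Module.End.mul_apply, hx, map_zero]

lemma apply_mem_range_pow (f : End R M) (m : ℕ) :
    ∀ x ∈ range (f ^ m), f x ∈ range (f ^ m) := by
  rintro _ ⟨y, rfl⟩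
  exact ⟨f y, by
    rw [← Module.End.mul_apply, ← (Commute.self_pow f m).eq, Module.End.mul_apply]⟩

lemma pow_apply_coe_of_apply_coe {f : End R M} {U : Submodule R M} {g : End R U}
    (hfg : ∀ u : U, f u = g u) (m : ℕ) (u : U) : (f ^ m) u = ((g ^ m) u : M) := by
  induction m generalizing u with
  | zero => rfl
  | succ m ih => rw [pow_succ, Module.End.mul_apply, hfg, ih, pow_succ, Module.End.mul_apply]

lemma isNilpotent_restrict_of_ker_pow_eq {f : End R M} {W : Submodule R M} {m : ℕ}
    (hW : ker (f ^ m) = W) (hf : ∀ x ∈ W, f x ∈ W) : IsNilpotent (f.restrict hf) := by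
  subst hW
  refine ⟨m, ?_⟩
  ext ⟨x, hx⟩
  rw [Module.End.pow_restrict]
  simpa using hx

end Invariant

section Fitting

variable {K V : Type*} [DivisionRing K] [AddCommGroup V] [Module K V] [FiniteDimensional K V]

lemma isCompl_ker_pow_finrank_range_pow_finrank (f : End K V) :
    IsCompl (ker (f ^ finrank K V)) (range (f ^ finrank K V)) := by
  refine (Submodule.isCompl_iff_disjoint _ _
    (by rw [add_comm, finrank_range_add_finrank_ker])).mpr ?_
  rw [Submodule.disjoint_def]
  rintro _ hx ⟨y, rfl⟩
  have hy : y ∈ ker (f ^ (finrank K V + finrank K V)) := by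
    rwa [mem_ker, pow_add, Module.End.mul_apply]
  rwa [Module.End.ker_pow_eq_ker_pow_finrank_of_le le_add_self, mem_ker] at hy

noncomputable def fittingPair (f : End K V) : ComplPair K V :=
  ⟨(range (f ^ finrank K V), ker (f ^ finrank K V)),
    (isCompl_ker_pow_finrank_range_pow_finrank f).symm⟩

lemma bijective_restrict_of_range_pow_finrank_eq {f : End K V} {U : Submodule K V}
    (hU : range (f ^ finrank K V) = U) (hf : ∀ x ∈ U, f x ∈ U) :
    Bijective (f.restrict hf) := by
  subst hU
  have hinj : Injective (f.restrict hf) := by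
    rw [← ker_eq_bot, Submodule.eq_bot_iff]
    rintro ⟨_, y, rfl⟩ hy
    have hy : y ∈ ker (f ^ (finrank K V + 1)) := by
      rw [mem_ker, pow_succ', Module.End.mul_apply]
      simpa [Subtype.ext_iff] using hy
    rw [Module.End.ker_pow_eq_ker_pow_finrank_of_le (Nat.le_succ _), mem_ker] at hy
    simp [hy]
  exact ⟨hinj, injective_iff_surjective.mp hinj⟩

lemma fittingPair_ofIsCompl {U W : Submodule K V} (hc : IsCompl U W) (g : U ≃ₗ[K] U)
    {h : End K W} (hh : IsNilpotent h) :
    fittingPair (ofIsCompl hc (U.subtype ∘ₗ g) (W.subtype ∘ₗ h)) = ⟨(U, W), hc⟩ := by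
  set f := ofIsCompl hc (U.subtype ∘ₗ g) (W.subtype ∘ₗ h)
  have hfU : ∀ u : U, f u = (g : End K U) u := fun u => ofIsCompl_apply_left hc u
  have hfW : ∀ w : W, f w = h w := fun w => ofIsCompl_apply_right hc w
  have hW : W ≤ ker (f ^ finrank K V) := by
    obtain ⟨m, hm⟩ := hh
    refine le_trans (fun w hw => ?_) (Module.End.ker_pow_le_ker_pow_finrank f m)
    rw [mem_ker, pow_apply_coe_of_apply_coe hfW m ⟨w, hw⟩, hm]
    rfl
  have hU : U ≤ range (f ^ finrank K V) := by
    intro u hu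
    obtain ⟨u', hu'⟩ := (g ^ finrank K V).surjective ⟨u, hu⟩
    refine ⟨u', ?_⟩
    rw [pow_apply_coe_of_apply_coe hfU, Module.End.coe_pow, LinearEquiv.coe_coe,
      ← LinearEquiv.coe_pow, hu']
  have hF := isCompl_ker_pow_finrank_range_pow_finrank f
  refine Subtype.ext (Prod.ext ?_ ?_)
  · exact ((le_iff_eq_of_codisjoint_of_disjoint (hc.codisjoint.mono_right hW)
      hF.disjoint).mp hU).symm
  · exact ((le_iff_eq_of_codisjoint_of_disjoint (hc.symm.codisjoint.mono_right hU)
      hF.symm.disjoint).mp hW).symm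

lemma card_fiber_fittingPair (p : ComplPair K V) :
    Nat.card {f : End K V // fittingPair f = p} =
      Nat.card (p.1.1 ≃ₗ[K] p.1.1) * Nat.card {h : End K p.1.2 // IsNilpotent h} := by
  obtain ⟨⟨U, W⟩, hc⟩ := p
  rw [← Nat.card_prod]
  refine (Nat.card_eq_of_bijective
    (fun gh => ⟨ofIsCompl hc (U.subtype ∘ₗ gh.1) (W.subtype ∘ₗ gh.2.1),
      fittingPair_ofIsCompl hc gh.1 gh.2.2⟩) ⟨?_, ?_⟩).symm
  · rintro ⟨g, h, hh⟩ ⟨g', h', hh'⟩ hgh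
    have hgh := congrArg Subtype.val hgh
    simp only at hgh
    refine Prod.ext (LinearEquiv.ext fun u => Subtype.ext ?_)
      (Subtype.ext (LinearMap.ext fun w => Subtype.ext ?_))
    · simpa using LinearMap.congr_fun hgh u
    · simpa using LinearMap.congr_fun hgh w
  · rintro ⟨f, hf⟩
    have hU : range (f ^ finrank K V) = U := congrArg (·.1.1) hf
    have hW : ker (f ^ finrank K V) = W := congrArg (·.1.2) hf
    have hfU : ∀ x ∈ U, f x ∈ U := hU ▸ apply_mem_range_pow f _
    have hfW : ∀ x ∈ W, f x ∈ W := hW ▸ apply_mem_ker_pow f _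
    refine ⟨(.ofBijective _ (bijective_restrict_of_range_pow_finrank_eq hU hfU),
      ⟨_, isNilpotent_restrict_of_ker_pow_eq hW hfW⟩), Subtype.ext ?_⟩
    exact ofIsCompl_eq hc (fun _ => rfl) (fun _ => rfl)

attribute [local instance] Fintype.ofFinite in
lemma card_end_eq_sum [Finite V] :
    Nat.card (End K V) = ∑ p : ComplPair K V,
      Nat.card (p.1.1 ≃ₗ[K] p.1.1) * Nat.card {h : End K p.1.2 // IsNilpotent h} := by
  rw [Nat.card_congr (Equiv.sigmaFiberEquiv fittingPair).symm, Nat.card_sigma]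
  exact Finset.sum_congr rfl fun p _ => card_fiber_fittingPair p

end Fitting

section Frames

variable {R V E F : Type*} [Ring R] [AddCommGroup V] [Module R V] [AddCommGroup E] [Module R E]
  [AddCommGroup F] [Module R F]

noncomputable def framePair (e : (E × F) ≃ₗ[R] V) : ComplPair R V :=
  ⟨(range (e.toLinearMap ∘ₗ inl R E F), range (e.toLinearMap ∘ₗ inr R E F)), by
    simpa only [range_comp, Submodule.orderIsoMapComap_apply] using
      (Submodule.orderIsoMapComap (e : (E × F) ≃ₗ[R] V)).isCompl isCompl_range_inl_inr⟩

lemma framePair_prodCongr_trans {U W : Submodule R V} (hc : IsCompl U W) (a : E ≃ₗ[R] U)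
    (b : F ≃ₗ[R] W) :
    framePair ((LinearEquiv.prodCongr a b).trans (Submodule.prodEquivOfIsCompl U W hc)) =
      ⟨(U, W), hc⟩ := by
  refine Subtype.ext (Prod.ext ?_ ?_) <;> ext x <;> simp [framePair]
  · exact ⟨fun ⟨y, hy⟩ => hy ▸ (a y).2, fun hx => ⟨a.symm ⟨x, hx⟩, by simp⟩⟩
  · exact ⟨fun ⟨y, hy⟩ => hy ▸ (b y).2, fun hx => ⟨b.symm ⟨x, hx⟩, by simp⟩⟩

lemma card_fiber_framePair (p : ComplPair R V) :
    Nat.card {e : (E × F) ≃ₗ[R] V // framePair e = p} =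
      Nat.card (E ≃ₗ[R] p.1.1) * Nat.card (F ≃ₗ[R] p.1.2) := by
  obtain ⟨⟨U, W⟩, hc⟩ := p
  rw [← Nat.card_prod]
  refine (Nat.card_eq_of_bijective
    (fun ab => ⟨(LinearEquiv.prodCongr ab.1 ab.2).trans (Submodule.prodEquivOfIsCompl U W hc),
      framePair_prodCongr_trans hc ab.1 ab.2⟩) ⟨?_, ?_⟩).symm
  · rintro ⟨a, b⟩ ⟨a', b'⟩ hab
    have hab := congrArg Subtype.val hab
    refine Prod.ext (LinearEquiv.ext fun x => Subtype.ext ?_)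
      (LinearEquiv.ext fun y => Subtype.ext ?_)
    · simpa using LinearEquiv.congr_fun hab (x, 0)
    · simpa using LinearEquiv.congr_fun hab (0, y)
  · rintro ⟨e, he⟩
    have hU : range (e.toLinearMap ∘ₗ inl R E F) = U := congrArg (·.1.1) he
    have hW : range (e.toLinearMap ∘ₗ inr R E F) = W := congrArg (·.1.2) he
    have hinl : Injective (e.toLinearMap ∘ₗ inl R E F) := e.injective.comp inl_injective
    have hinr : Injective (e.toLinearMap ∘ₗ inr R E F) := e.injective.comp inr_injective
    refine ⟨((LinearEquiv.ofInjective _ hinl).trans (LinearEquiv.ofEq _ _ hU),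
      (LinearEquiv.ofInjective _ hinr).trans (LinearEquiv.ofEq _ _ hW)), Subtype.ext ?_⟩
    ext ⟨x, y⟩
    simp [← map_add]

attribute [local instance] Fintype.ofFinite in
lemma card_linearEquiv_prod_eq_sum [Finite V] [Finite E] [Finite F] :
    Nat.card ((E × F) ≃ₗ[R] V) = ∑ p : ComplPair R V,
      Nat.card (E ≃ₗ[R] p.1.1) * Nat.card (F ≃ₗ[R] p.1.2) := by
  rw [Nat.card_congr (Equiv.sigmaFiberEquiv framePair).symm, Nat.card_sigma]
  exact Finset.sum_congr rfl fun p _ => card_fiber_framePair p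

end Frames

section FiniteField

variable (K : Type*) [Field K]

noncomputable def cardGL (d : ℕ) : ℕ := Nat.card (GL (Fin d) K)

noncomputable def cardNilpotent (d : ℕ) : ℕ :=
  Nat.card {A : Matrix (Fin d) (Fin d) K // IsNilpotent A}

variable {K}

lemma card_linearEquiv_self (U : Type*) [AddCommGroup U] [Module K U] [FiniteDimensional K U] :
    Nat.card (U ≃ₗ[K] U) = cardGL K (finrank K U) :=
  let b := finBasisOfFinrankEq K U rfl
  Nat.card_congr ((LinearMap.GeneralLinearGroup.generalLinearEquiv K U).symm.trans
    (Units.mapEquiv (LinearMap.toMatrixAlgEquiv b).toMulEquiv)).toEquiv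

lemma card_linearEquiv (E U : Type*) [AddCommGroup E] [Module K E] [FiniteDimensional K E]
    [AddCommGroup U] [Module K U] [FiniteDimensional K U] :
    Nat.card (E ≃ₗ[K] U) = if finrank K E = finrank K U then cardGL K (finrank K U) else 0 := by
  split_ifs with h
  · let e := LinearEquiv.ofFinrankEq E U h
    rw [← card_linearEquiv_self]
    exact Nat.card_congr ⟨e.symm.trans, e.trans, fun a => by ext; simp, fun a => by ext; simp⟩
  · have : IsEmpty (E ≃ₗ[K] U) := ⟨fun e => h e.finrank_eq⟩
    exact Nat.card_of_isEmpty

lemma card_isNilpotent_end (U : Type*) [AddCommGroup U] [Module K U] [FiniteDimensional K U] :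
    Nat.card {h : End K U // IsNilpotent h} = cardNilpotent K (finrank K U) :=
  let b := finBasisOfFinrankEq K U rfl
  Nat.card_congr ((LinearMap.toMatrixAlgEquiv b).toEquiv.subtypeEquiv
    fun h => (LinearMap.isNilpotent_toMatrix_iff b h).symm)

lemma cardGL_pos [Finite K] (d : ℕ) : 0 < cardGL K d :=
  Nat.card_pos

lemma cardGL_succ [Fintype K] (m : ℕ) :
    cardGL K (m + 1) = Fintype.card K ^ m * (Fintype.card K ^ (m + 1) - 1) * cardGL K m := by
  have hq : ∀ i : Fin m, Fintype.card K ^ (m + 1) - Fintype.card K ^ (i.succ : ℕ) =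
      Fintype.card K * (Fintype.card K ^ m - Fintype.card K ^ (i : ℕ)) := fun i => by
    rw [Nat.mul_sub, Fin.val_succ, ← pow_succ', ← pow_succ']
  rw [cardGL, cardGL, Matrix.card_GL_field, Matrix.card_GL_field, Fin.prod_univ_succ,
    Finset.prod_congr rfl fun i _ => hq i, Finset.prod_mul_distrib, Finset.prod_const,
    Finset.card_univ, Fintype.card_fin, Fin.val_zero, pow_zero]
  ring

section Decompositions

attribute [local instance] Fintype.ofFinite

variable {V : Type*} [AddCommGroup V] [Module K V] [Finite V]

lemma card_complPair_finrank_mul [Finite K] {j : ℕ} (hj : j ≤ finrank K V) :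
    #{p : ComplPair K V | finrank K p.1.2 = j} * (cardGL K (finrank K V - j) * cardGL K j) =
      cardGL K (finrank K V) := by
  have hE : finrank K ((Fin (finrank K V - j) → K) × (Fin j → K)) = finrank K V := by
    simp; omega
  have h := card_linearEquiv_prod_eq_sum (R := K) (V := V)
    (E := Fin (finrank K V - j) → K) (F := Fin j → K)
  rw [card_linearEquiv, if_pos hE] at h
  rw [h, Finset.card_filter, Finset.sum_mul]
  refine Finset.sum_congr rfl fun p _ => ?_
  have hp := Submodule.finrank_add_eq_of_isCompl p.2
  rw [card_linearEquiv, card_linearEquiv, finrank_fin_fun, finrank_fin_fun]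
  by_cases hpj : finrank K p.1.2 = j
  · rw [if_pos hpj, if_pos (by omega), if_pos hpj.symm, hpj, one_mul,
      show finrank K p.1.1 = finrank K V - j by omega]
  · rw [if_neg hpj, if_neg (Ne.symm hpj), mul_zero, zero_mul]

lemma card_end_eq_sum_range : Nat.card (End K V) = ∑ j ∈ Finset.range (finrank K V + 1),
    #{p : ComplPair K V | finrank K p.1.2 = j} *
      (cardGL K (finrank K V - j) * cardNilpotent K j) := by
  rw [card_end_eq_sum, ← Finset.sum_fiberwise_of_maps_to
    (g := fun p : ComplPair K V => finrank K p.1.2) (t := Finset.range (finrank K V + 1))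
    fun p _ => Finset.mem_range_succ_iff.mpr (Submodule.finrank_le _)]
  refine Finset.sum_congr rfl fun j _ => ?_
  rw [← smul_eq_mul, ← Finset.sum_const]
  refine Finset.sum_congr rfl fun p hp => ?_
  rw [Finset.mem_filter] at hp
  rw [card_linearEquiv_self, card_isNilpotent_end, hp.2,
    ← Submodule.finrank_add_eq_of_isCompl p.2, hp.2, Nat.add_sub_cancel]

end Decompositions

lemma sum_range_cardNilpotent_div_cardGL [Fintype K] (n : ℕ) :
    (Fintype.card K ^ (n * n) : ℚ) / cardGL K n =
      ∑ j ∈ Finset.range (n + 1), (cardNilpotent K j : ℚ) / cardGL K j := by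
  have hV : finrank K (Fin n → K) = n := finrank_fin_fun K
  have hEnd : Nat.card (End K (Fin n → K)) = Fintype.card K ^ (n * n) := by
    rw [Module.natCard_eq_pow_finrank (K := K), finrank_linearMap, hV, Nat.card_eq_fintype_card]
  have hsum := card_end_eq_sum_range (K := K) (V := Fin n → K)
  rw [hEnd, hV] at hsum
  rw [← Nat.cast_pow, hsum, Nat.cast_sum, Finset.sum_div]
  refine Finset.sum_congr rfl fun j hj => ?_
  have hc := card_complPair_finrank_mul (K := K) (V := Fin n → K)
    ((Finset.mem_range_succ_iff.mp hj).trans hV.ge)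
  rw [hV] at hc
  rw [div_eq_div_iff (mod_cast (cardGL_pos n).ne') (mod_cast (cardGL_pos j).ne'), ← hc]
  push_cast
  ring

theorem cardNilpotent_eq [Fintype K] (n : ℕ) :
    cardNilpotent K n = Fintype.card K ^ (n ^ 2 - n) := by
  have hG (d : ℕ) : (cardGL K d : ℚ) ≠ 0 := mod_cast (cardGL_pos d).ne'
  rcases n with _ | m
  · have h := sum_range_cardNilpotent_div_cardGL (K := K) 0
    rw [Finset.sum_range_one, div_left_inj' (hG 0)] at h
    exact_mod_cast h.symm
  · have h := sum_range_cardNilpotent_div_cardGL (K := K) (m + 1)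
    rw [Finset.sum_range_succ, ← sum_range_cardNilpotent_div_cardGL m] at h
    have hq : 1 ≤ Fintype.card K ^ (m + 1) := Nat.one_le_pow _ _ Fintype.card_pos
    have hGs := hG (m + 1)
    rw [cardGL_succ] at h hGs
    push_cast [hq] at h hGs
    have hq1 : (Fintype.card K : ℚ) ^ (m + 1) - 1 ≠ 0 :=
      right_ne_zero_of_mul (left_ne_zero_of_mul hGs)
    have hGm := hG m
    field_simp at h
    have hN : (cardNilpotent K (m + 1) : ℚ) = (Fintype.card K : ℚ) ^ (m * m + m) := by
      linear_combination -h
    rw [show (m + 1) ^ 2 - (m + 1) = m * m + m from Nat.sub_eq_of_eq_add (by ring)]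
    exact_mod_cast hN

end FiniteField

end FineHerstein

theorem card_nilpotent_matrices_general (q n : ℕ)
    (K : Type*) [Field K] [Fintype K] (hK : Fintype.card K = q) :
    Nat.card {A : Matrix (Fin n) (Fin n) K // A ^ n = 0} = q ^ (n ^ 2 - n) := by
  subst hK
  rw [← FineHerstein.cardNilpotent_eq, FineHerstein.cardNilpotent]
  refine Nat.card_congr (Equiv.subtypeEquivRight fun A => ⟨fun hA => ⟨n, hA⟩, fun hA => ?_⟩)
  simpa using Matrix.pow_card_eq_zero_of_isNilpotent hA

/-- **Fine–Herstein.** The number of nilpotent `n × n` matrices over a finite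
field with `q` elements is `q ^ (n² - n)`. -/
theorem card_nilpotent_matrices (q n : ℕ) (hn : 1 ≤ n)
    (K : Type*) [Field K] [Fintype K] (hK : Fintype.card K = q) :
    Nat.card {A : Matrix (Fin n) (Fin n) K // A ^ n = 0} = q ^ (n ^ 2 - n) :=
  card_nilpotent_matrices_general q n K hK
end

section
/- (Steinberg's count for GL_n) Let F_q be a finite field with q elements and let n ≥ 1. The number of unipotent elements of the group GL_n(F_q) equals q^{n(n-1)}, which is the square of the order of a Sylow p-subgroup of GL_n(F_q) when q is a power of the prime p. -/
/-!
Every endomorphism `f` of an `n`-dimensional space `V` over `𝔽_q` is determined by its Fitting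
decomposition `V = ker f ^ n ⊕ range f ^ n` together with its restrictions, which are nilpotent on
the first summand and invertible on the second. Conversely any splitting `V = U ⊕ W` with a
nilpotent endomorphism of `U` and an automorphism of `W` arises this way. Splittings with
`dim U = k` correspond to isomorphisms `𝔽_q^k × 𝔽_q^(n-k) ≃ V` up to `GL_k × GL_(n-k)`, so writing
`N_k` for the number of nilpotent `k × k` matrices,
  `q ^ (n ^ 2) = ∑_{k ≤ n} |GL_n| / (|GL_k| |GL_(n-k)|) · N_k · |GL_(n-k)|`,
i.e. `q ^ (n ^ 2) / |GL_n| = ∑_{k ≤ n} N_k / |GL_k|`. Subtracting the same identity for `n - 1`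
and using `|GL_n| = q ^ (n-1) (q ^ n - 1) |GL_(n-1)|` gives `N_n = q ^ (n (n - 1))`. Finally
`u ↦ u - 1` matches the unipotent elements with the nilpotent matrices.
-/

open Module LinearMap

section Finite

variable {R M N : Type*} [Semiring R] [AddCommMonoid M] [Module R M] [AddCommMonoid N]
  [Module R N] [Finite M] [Finite N]

instance LinearMap.finite : Finite (M →ₗ[R] N) := FunLike.finite _

instance LinearEquiv.finite : Finite (M ≃ₗ[R] N) := FunLike.finite _

end Finite

abbrev ComplPair (R M : Type*) [Ring R] [AddCommGroup M] [Module R M] :=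
  {p : Submodule R M × Submodule R M // IsCompl p.1 p.2}

namespace ComplPair

section LinearEquivProd

variable {R A B V : Type*} [Ring R] [AddCommGroup A] [Module R A] [AddCommGroup B] [Module R B]
  [AddCommGroup V] [Module R V]

def ofLinearEquivProd (φ : (A × B) ≃ₗ[R] V) : ComplPair R V :=
  ⟨(range (φ.toLinearMap ∘ₗ inl R A B), range (φ.toLinearMap ∘ₗ inr R A B)), by
    rw [range_comp, range_comp]
    exact isCompl_range_inl_inr.map (Submodule.orderIsoMapComap φ)⟩

lemma fst_ofLinearEquivProd (φ : (A × B) ≃ₗ[R] V) :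
    (ofLinearEquivProd φ).1.1 = range (φ.toLinearMap ∘ₗ inl R A B) := rfl

lemma snd_ofLinearEquivProd (φ : (A × B) ≃ₗ[R] V) :
    (ofLinearEquivProd φ).1.2 = range (φ.toLinearMap ∘ₗ inr R A B) := rfl

variable (p : ComplPair R V)

noncomputable def linearEquivProd (e₁ : A ≃ₗ[R] p.1.1) (e₂ : B ≃ₗ[R] p.1.2) :
    (A × B) ≃ₗ[R] V :=
  (e₁.prodCongr e₂).trans (Submodule.prodEquivOfIsCompl _ _ p.2)

variable {p}

lemma linearEquivProd_apply (e₁ : A ≃ₗ[R] p.1.1) (e₂ : B ≃ₗ[R] p.1.2) (x : A × B) :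
    p.linearEquivProd e₁ e₂ x = e₁ x.1 + e₂ x.2 := rfl

lemma linearEquivProd_comp_inl (e₁ : A ≃ₗ[R] p.1.1) (e₂ : B ≃ₗ[R] p.1.2) :
    (p.linearEquivProd e₁ e₂).toLinearMap ∘ₗ inl R A B = p.1.1.subtype ∘ₗ e₁.toLinearMap := by
  ext; simp [linearEquivProd_apply]

lemma linearEquivProd_comp_inr (e₁ : A ≃ₗ[R] p.1.1) (e₂ : B ≃ₗ[R] p.1.2) :
    (p.linearEquivProd e₁ e₂).toLinearMap ∘ₗ inr R A B = p.1.2.subtype ∘ₗ e₂.toLinearMap := by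
  ext; simp [linearEquivProd_apply]

lemma ofLinearEquivProd_linearEquivProd (e₁ : A ≃ₗ[R] p.1.1) (e₂ : B ≃ₗ[R] p.1.2) :
    ofLinearEquivProd (p.linearEquivProd e₁ e₂) = p := by
  refine Subtype.ext (Prod.ext ?_ ?_)
  · rw [fst_ofLinearEquivProd, linearEquivProd_comp_inl, range_comp, LinearEquiv.range,
      Submodule.map_top, Submodule.range_subtype]
  · rw [snd_ofLinearEquivProd, linearEquivProd_comp_inr, range_comp, LinearEquiv.range,
      Submodule.map_top, Submodule.range_subtype]

variable (p)

noncomputable def ofLinearEquivProdFiberEquiv :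
    {φ : (A × B) ≃ₗ[R] V // ofLinearEquivProd φ = p} ≃ (A ≃ₗ[R] p.1.1) × (B ≃ₗ[R] p.1.2) where
  toFun φ :=
    ((LinearEquiv.ofInjective (φ.1.toLinearMap ∘ₗ inl R A B)
        (φ.1.injective.comp inl_injective)).trans
        (LinearEquiv.ofEq _ _ ((fst_ofLinearEquivProd φ.1).symm.trans (congrArg (·.1.1) φ.2))),
      (LinearEquiv.ofInjective (φ.1.toLinearMap ∘ₗ inr R A B)
        (φ.1.injective.comp inr_injective)).trans
        (LinearEquiv.ofEq _ _ ((snd_ofLinearEquivProd φ.1).symm.trans (congrArg (·.1.2) φ.2))))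
  invFun e := ⟨p.linearEquivProd e.1 e.2, ofLinearEquivProd_linearEquivProd e.1 e.2⟩
  left_inv φ := by
    refine Subtype.ext (LinearEquiv.ext fun x => ?_)
    simp [linearEquivProd_apply, ← map_add]
  right_inv e := by
    ext x <;> simp [linearEquivProd_apply]

variable (R A B V)

noncomputable def linearEquivProdEquiv :
    ((A × B) ≃ₗ[R] V) ≃ Σ p : ComplPair R V, (A ≃ₗ[R] p.1.1) × (B ≃ₗ[R] p.1.2) :=
  (Equiv.sigmaFiberEquiv ofLinearEquivProd).symm.trans
    (Equiv.sigmaCongrRight ofLinearEquivProdFiberEquiv)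

end LinearEquivProd

section ProdMap

variable {R V : Type*} [Ring R] [AddCommGroup V] [Module R V] (p : ComplPair R V)

noncomputable def prodMap (g : End R p.1.1) (u : End R p.1.2) : End R V :=
  ofIsCompl p.2 (p.1.1.subtype ∘ₗ g) (p.1.2.subtype ∘ₗ u)

variable {p}

@[simp]
lemma prodMap_apply_fst (g : End R p.1.1) (u : End R p.1.2) (x : p.1.1) :
    p.prodMap g u x = g x :=
  ofIsCompl_apply_left _ _

@[simp]
lemma prodMap_apply_snd (g : End R p.1.1) (u : End R p.1.2) (x : p.1.2) :
    p.prodMap g u x = u x :=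
  ofIsCompl_apply_right _ _

lemma prodMap_mul (g g' : End R p.1.1) (u u' : End R p.1.2) :
    p.prodMap g u * p.prodMap g' u' = p.prodMap (g * g') (u * u') :=
  (ofIsCompl_eq _ (fun _ => by simp) (fun _ => by simp)).symm

lemma prodMap_pow (g : End R p.1.1) (u : End R p.1.2) (m : ℕ) :
    p.prodMap g u ^ m = p.prodMap (g ^ m) (u ^ m) := by
  induction m with
  | zero => exact (ofIsCompl_eq _ (fun _ => rfl) (fun _ => rfl)).symm
  | succ m ih => rw [pow_succ, ih, prodMap_mul, ← pow_succ, ← pow_succ]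

lemma ker_prodMap_zero {u : End R p.1.2} (hu : IsUnit u) : ker (p.prodMap 0 u) = p.1.1 := by
  rw [prodMap, ofIsCompl_eq_add, comp_zero, zero_comp, zero_add, ker_comp_of_ker_eq_bot,
    Submodule.ker_projectionOnto]
  exact ker_eq_bot_of_injective (p.1.2.injective_subtype.comp ((End.isUnit_iff u).mp hu).1)

lemma range_prodMap_zero {u : End R p.1.2} (hu : IsUnit u) : range (p.prodMap 0 u) = p.1.2 := by
  rw [prodMap, range_ofIsCompl, comp_zero, range_zero, bot_sup_eq, range_comp,
    range_eq_top.mpr ((End.isUnit_iff u).mp hu).2, Submodule.map_top, Submodule.range_subtype]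

end ProdMap

end ComplPair

namespace Module.End

section Semiring

variable {R M : Type*} [Semiring R] [AddCommMonoid M] [Module R M]

lemma mapsTo_ker_pow (f : End R M) (m : ℕ) : ∀ x ∈ ker (f ^ m), f x ∈ ker (f ^ m) := by
  intro x hx
  rw [mem_ker, ← mul_apply, ← pow_succ, pow_succ', mul_apply, mem_ker.mp hx, map_zero]

lemma mapsTo_range_pow (f : End R M) (m : ℕ) : ∀ x ∈ range (f ^ m), f x ∈ range (f ^ m) := by
  rintro _ ⟨y, rfl⟩
  exact ⟨f y, by rw [← mul_apply, ← pow_succ, pow_succ', mul_apply]⟩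

end Semiring

variable {K V : Type*} [Field K] [AddCommGroup V] [Module K V] [FiniteDimensional K V]

theorem isNilpotent_iff_pow_finrank_eq_zero {f : End K V} :
    IsNilpotent f ↔ f ^ finrank K V = 0 := by
  refine ⟨fun ⟨m, hm⟩ => ?_, fun h => ⟨_, h⟩⟩
  rw [← ker_eq_top, ← ker_pow_eq_ker_pow_finrank_of_le (le_max_left _ m),
    pow_eq_zero_of_le (le_max_right _ _) hm, ker_zero]

lemma isCompl_ker_pow_finrank_range_pow_finrank (f : End K V) :
    IsCompl (ker (f ^ finrank K V)) (range (f ^ finrank K V)) := by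
  set n := finrank K V
  refine (Submodule.isCompl_iff_disjoint _ _
    (by rw [add_comm, finrank_range_add_finrank_ker])).mpr (Submodule.disjoint_def.mpr ?_)
  rintro _ hx ⟨y, rfl⟩
  have hy : y ∈ ker (f ^ (n + n)) := by rwa [mem_ker, pow_add, mul_apply]
  rwa [ker_pow_eq_ker_pow_finrank_of_le (by omega), mem_ker] at hy

noncomputable def fittingPair (f : End K V) : ComplPair K V :=
  ⟨(ker (f ^ finrank K V), range (f ^ finrank K V)),
    f.isCompl_ker_pow_finrank_range_pow_finrank⟩

variable {f : End K V} {p : ComplPair K V}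

lemma mapsTo_fst_of_fittingPair_eq (hf : f.fittingPair = p) : ∀ x ∈ p.1.1, f x ∈ p.1.1 := by
  subst hf; exact f.mapsTo_ker_pow _

lemma mapsTo_snd_of_fittingPair_eq (hf : f.fittingPair = p) : ∀ x ∈ p.1.2, f x ∈ p.1.2 := by
  subst hf; exact f.mapsTo_range_pow _

lemma isNilpotent_restrict_of_fittingPair_eq (hf : f.fittingPair = p) :
    IsNilpotent (f.restrict (mapsTo_fst_of_fittingPair_eq hf)) := by
  subst hf
  refine ⟨finrank K V, ?_⟩
  ext ⟨x, hx⟩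
  rw [pow_restrict, restrict_apply]
  exact mem_ker.mp hx

lemma isUnit_restrict_of_fittingPair_eq (hf : f.fittingPair = p) :
    IsUnit (f.restrict (mapsTo_snd_of_fittingPair_eq hf)) := by
  subst hf
  rw [isUnit_iff_ker_eq_bot, Submodule.eq_bot_iff]
  rintro ⟨x, hxW⟩ hx
  have hfx : f x = 0 := by simpa using congrArg Subtype.val (mem_ker.mp hx)
  have hxU : x ∈ ker (f ^ (finrank K V + 1)) := by
    rw [mem_ker, pow_succ, mul_apply, hfx, map_zero]
  rw [ker_pow_eq_ker_pow_finrank_of_le (by omega)] at hxU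
  exact Subtype.ext <|
    Submodule.disjoint_def.mp f.isCompl_ker_pow_finrank_range_pow_finrank.disjoint x hxU hxW

lemma fittingPair_prodMap {g : End K p.1.1} {u : End K p.1.2} (hg : IsNilpotent g)
    (hu : IsUnit u) : (p.prodMap g u).fittingPair = p := by
  have hgn : g ^ finrank K V = 0 :=
    pow_eq_zero_of_le (Submodule.finrank_le _) (isNilpotent_iff_pow_finrank_eq_zero.mp hg)
  refine Subtype.ext (Prod.ext ?_ ?_) <;> simp only [fittingPair, ComplPair.prodMap_pow, hgn]
  · exact ComplPair.ker_prodMap_zero (hu.pow _)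
  · exact ComplPair.range_prodMap_zero (hu.pow _)

variable (p)

noncomputable def fittingPairFiberEquiv :
    {f : End K V // f.fittingPair = p} ≃ {g : End K p.1.1 // IsNilpotent g} × (End K p.1.2)ˣ where
  toFun f := (⟨_, isNilpotent_restrict_of_fittingPair_eq f.2⟩,
    (isUnit_restrict_of_fittingPair_eq f.2).unit)
  invFun gu := ⟨p.prodMap gu.1 gu.2, fittingPair_prodMap gu.1.2 gu.2.isUnit⟩
  left_inv f := Subtype.ext (ofIsCompl_eq _ (fun _ => rfl) (fun _ => rfl))
  right_inv gu := Prod.ext (Subtype.ext (LinearMap.ext fun x => Subtype.ext (by simp)))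
    (Units.ext (LinearMap.ext fun x => Subtype.ext (by simp)))

variable (K V)

noncomputable def fittingEquiv :
    End K V ≃ Σ p : ComplPair K V, {g : End K p.1.1 // IsNilpotent g} × (End K p.1.2)ˣ :=
  (Equiv.sigmaFiberEquiv fittingPair).symm.trans (Equiv.sigmaCongrRight fittingPairFiberEquiv)

end Module.End

theorem Matrix.isNilpotent_iff_pow_card_eq_zero {K ι : Type*} [Field K] [Fintype ι]
    [DecidableEq ι] {N : Matrix ι ι K} : IsNilpotent N ↔ N ^ Fintype.card ι = 0 := by
  rw [← IsNilpotent.map_iff (Matrix.toLinAlgEquiv' (R := K) (n := ι)).injective,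
    End.isNilpotent_iff_pow_finrank_eq_zero, finrank_fintype_fun_eq_card, ← map_pow,
    map_eq_zero_iff _ (AlgEquiv.injective _)]

section Transport

variable {K U A B : Type*} [Field K] [AddCommGroup U] [Module K U] [FiniteDimensional K U]
  [AddCommGroup A] [Module K A] [FiniteDimensional K A]
  [AddCommGroup B] [Module K B] [FiniteDimensional K B] {k : ℕ}

lemma card_units_end_eq_card_GL (h : finrank K U = k) :
    Nat.card (End K U)ˣ = Nat.card (GL (Fin k) K) :=
  Nat.card_congr (Units.mapEquiv (toMatrixAlgEquiv (finBasisOfFinrankEq K U h)).toMulEquiv).toEquiv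

lemma card_isNilpotent_end_eq_card_isNilpotent_matrix (h : finrank K U = k) :
    Nat.card {g : End K U // IsNilpotent g} =
      Nat.card {N : Matrix (Fin k) (Fin k) K // IsNilpotent N} :=
  Nat.card_congr <| (toMatrixAlgEquiv (finBasisOfFinrankEq K U h)).toEquiv.subtypeEquiv
    fun _ => (IsNilpotent.map_iff (AlgEquiv.injective _)).symm

lemma card_linearEquiv_eq_card_GL (hA : finrank K A = k) (hB : finrank K B = k) :
    Nat.card (A ≃ₗ[K] B) = Nat.card (GL (Fin k) K) := by
  let e := LinearEquiv.ofFinrankEq A B (hA.trans hB.symm)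
  calc Nat.card (A ≃ₗ[K] B) = Nat.card (B ≃ₗ[K] B) :=
        Nat.card_congr ⟨e.symm.trans, e.trans, fun f => by ext; simp, fun f => by ext; simp⟩
    _ = Nat.card (End K B)ˣ :=
        Nat.card_congr (GeneralLinearGroup.generalLinearEquiv K B).toEquiv.symm
    _ = _ := card_units_end_eq_card_GL hB

end Transport

section Counting

variable {K V : Type*} [Field K] [Fintype K] [AddCommGroup V] [Module K V] [FiniteDimensional K V]
  {n : ℕ}

local notation "q" => Fintype.card K

lemma card_complPair_mul_card_GL_mul_card_GL (hV : finrank K V = n) {k : ℕ} (hk : k ≤ n) :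
    Nat.card {p : ComplPair K V // finrank K p.1.1 = k} *
        (Nat.card (GL (Fin k) K) * Nat.card (GL (Fin (n - k)) K)) =
      Nat.card (GL (Fin n) K) := by
  classical
  have := Module.finite_of_finite K (M := V)
  let _ := Fintype.ofFinite (ComplPair K V)
  have hterm (p : ComplPair K V) :
      Nat.card ((Fin k → K) ≃ₗ[K] p.1.1) * Nat.card ((Fin (n - k) → K) ≃ₗ[K] p.1.2) =
        if finrank K p.1.1 = k then
          Nat.card (GL (Fin k) K) * Nat.card (GL (Fin (n - k)) K) else 0 := by
    split_ifs with h
    · have h₂ : finrank K p.1.2 = n - k := by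
        have := Submodule.finrank_add_eq_of_isCompl p.2; omega
      rw [card_linearEquiv_eq_card_GL (finrank_fin_fun K) h,
        card_linearEquiv_eq_card_GL (finrank_fin_fun K) h₂]
    · have : IsEmpty ((Fin k → K) ≃ₗ[K] p.1.1) :=
        ⟨fun e => h (e.finrank_eq.symm.trans (finrank_fin_fun K))⟩
      rw [Nat.card_of_isEmpty, zero_mul]
  calc _ = ∑ p : ComplPair K V, Nat.card ((Fin k → K) ≃ₗ[K] p.1.1) *
        Nat.card ((Fin (n - k) → K) ≃ₗ[K] p.1.2) := by
        rw [Finset.sum_congr rfl fun p _ => hterm p, Finset.sum_ite, Finset.sum_const_zero,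
          add_zero, Finset.sum_const, smul_eq_mul, Nat.card_eq_fintype_card, Fintype.card_subtype]
    _ = Nat.card (((Fin k → K) × (Fin (n - k) → K)) ≃ₗ[K] V) := by
        simp_rw [Nat.card_congr (ComplPair.linearEquivProdEquiv K _ _ V), Nat.card_sigma,
          Nat.card_prod]
    _ = _ := card_linearEquiv_eq_card_GL
          (by rw [finrank_prod, finrank_fin_fun, finrank_fin_fun]; omega) hV

lemma card_end_eq_sum_card_complPair (hV : finrank K V = n) :
    Nat.card (End K V) = ∑ k ∈ Finset.range (n + 1),
      Nat.card {p : ComplPair K V // finrank K p.1.1 = k} *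
        (Nat.card {N : Matrix (Fin k) (Fin k) K // IsNilpotent N} *
          Nat.card (GL (Fin (n - k)) K)) := by
  classical
  have := Module.finite_of_finite K (M := V)
  let _ := Fintype.ofFinite (ComplPair K V)
  have hterm (p : ComplPair K V) :
      Nat.card ({g : End K p.1.1 // IsNilpotent g} × (End K p.1.2)ˣ) =
        Nat.card {N : Matrix (Fin (finrank K p.1.1)) (Fin (finrank K p.1.1)) K // IsNilpotent N} *
          Nat.card (GL (Fin (n - finrank K p.1.1)) K) := by
    rw [Nat.card_prod, card_isNilpotent_end_eq_card_isNilpotent_matrix rfl,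
      card_units_end_eq_card_GL (k := n - finrank K p.1.1)
        (by have := Submodule.finrank_add_eq_of_isCompl p.2; omega)]
  rw [Nat.card_congr (End.fittingEquiv K V), Nat.card_sigma,
    Finset.sum_congr rfl fun p _ => hterm p,
    ← Finset.sum_fiberwise_of_maps_to (g := fun p : ComplPair K V => finrank K p.1.1)
      (t := Finset.range (n + 1)) fun p _ => ?_]
  · refine Finset.sum_congr rfl fun k _ => ?_
    rw [Finset.sum_congr rfl fun p hp => by rw [(Finset.mem_filter.mp hp).2], Finset.sum_const,
      smul_eq_mul, ← Fintype.card_subtype, ← Nat.card_eq_fintype_card]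
  · exact Finset.mem_range_succ_iff.mpr (hV ▸ Submodule.finrank_le _)

lemma Matrix.card_GL_succ (n : ℕ) :
    Nat.card (GL (Fin (n + 1)) K) = q ^ n * (q ^ (n + 1) - 1) * Nat.card (GL (Fin n) K) := by
  have hpow (i : ℕ) : q ^ (n + 1) - q ^ (i + 1) = q * (q ^ n - q ^ i) := by
    rw [Nat.mul_sub, ← pow_succ', ← pow_succ']
  simp only [Matrix.card_GL_field, Fin.prod_univ_succ, Fin.val_zero, pow_zero, Fin.val_succ, hpow,
    Finset.prod_mul_distrib, Finset.prod_const, Finset.card_univ, Fintype.card_fin]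
  ring

lemma sum_card_isNilpotent_div_card_GL (n : ℕ) :
    ∑ k ∈ Finset.range (n + 1),
        (Nat.card {N : Matrix (Fin k) (Fin k) K // IsNilpotent N} : ℚ) / Nat.card (GL (Fin k) K) =
      q ^ (n * n) / Nat.card (GL (Fin n) K) := by
  have hend := card_end_eq_sum_card_complPair (K := K) (finrank_fin_fun K (n := n))
  rw [Module.natCard_eq_pow_finrank (K := K), finrank_linearMap, finrank_fin_fun,
    Nat.card_eq_fintype_card] at hend
  have hGL (k : ℕ) : (Nat.card (GL (Fin k) K) : ℚ) ≠ 0 := by exact_mod_cast Nat.card_pos.ne'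
  rw [eq_div_iff (hGL n), Finset.sum_mul, ← Nat.cast_pow, hend, Nat.cast_sum]
  refine Finset.sum_congr rfl fun k hk => ?_
  have hc := card_complPair_mul_card_GL_mul_card_GL (K := K) (finrank_fin_fun K)
    (Finset.mem_range_succ_iff.mp hk)
  rw [div_mul_eq_mul_div, div_eq_iff (hGL k), ← hc]
  push_cast
  ring

theorem Matrix.card_isNilpotent (n : ℕ) :
    Nat.card {N : Matrix (Fin n) (Fin n) K // IsNilpotent N} = q ^ (n * (n - 1)) := by
  have hGL (k : ℕ) : (Nat.card (GL (Fin k) K) : ℚ) ≠ 0 := by exact_mod_cast Nat.card_pos.ne'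
  cases n with
  | zero =>
    have h := sum_card_isNilpotent_div_card_GL (K := K) 0
    simp only [zero_add, Finset.sum_range_one, mul_zero, pow_zero] at h
    exact_mod_cast (div_left_inj' (hGL 0)).mp h
  | succ m =>
    have h := sum_card_isNilpotent_div_card_GL (K := K) (m + 1)
    rw [Finset.sum_range_succ, sum_card_isNilpotent_div_card_GL] at h
    have hrec : (Nat.card (GL (Fin (m + 1)) K) : ℚ) =
        q ^ m * (q ^ (m + 1) - 1) * Nat.card (GL (Fin m) K) := by
      rw [Matrix.card_GL_succ, Nat.cast_mul, Nat.cast_mul,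
        Nat.cast_sub (Nat.one_le_pow _ _ Fintype.card_pos)]
      push_cast
      ring
    have h0 := hGL m
    have h1 := hGL (m + 1)
    field_simp at h
    rw [hrec] at h
    rw [Nat.add_sub_cancel]
    exact_mod_cast (mul_left_cancel₀ h0 (by linear_combination h) :
      (Nat.card {N : Matrix (Fin (m + 1)) (Fin (m + 1)) K // IsNilpotent N} : ℚ) =
        q ^ ((m + 1) * m))

end Counting

noncomputable def Units.subOneEquiv (R : Type*) [Ring R] (n : ℕ) :
    {u : Rˣ // ((u : R) - 1) ^ n = 0} ≃ {x : R // x ^ n = 0} where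
  toFun u := ⟨(u.1 : R) - 1, u.2⟩
  invFun x := ⟨(IsNilpotent.isUnit_one_add ⟨n, x.2⟩).unit, by simpa using x.2⟩
  left_inv u := Subtype.ext (Units.ext (by simp))
  right_inv x := Subtype.ext (by simp)

theorem card_unipotent_GL_general (q n : ℕ)
    (K : Type*) [Field K] [Fintype K] (hK : Fintype.card K = q) :
    Nat.card {u : (Matrix (Fin n) (Fin n) K)ˣ //
        ((u : Matrix (Fin n) (Fin n) K) - 1) ^ n = 0} = q ^ (n * (n - 1)) ∧
      q ^ (n * (n - 1)) = (q ^ (n * (n - 1) / 2)) ^ 2 := by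
  subst hK
  refine ⟨?_, by rw [← pow_mul, Nat.div_mul_cancel (Nat.even_mul_pred_self n).two_dvd]⟩
  calc _ = Nat.card {N : Matrix (Fin n) (Fin n) K // N ^ n = 0} :=
        Nat.card_congr (Units.subOneEquiv _ n)
    _ = Nat.card {N : Matrix (Fin n) (Fin n) K // IsNilpotent N} := by
        simp_rw [Matrix.isNilpotent_iff_pow_card_eq_zero, Fintype.card_fin]
    _ = _ := Matrix.card_isNilpotent n

/-- **Steinberg's count for `GL_n`.** The number of unipotent elements of
`GL_n(F_q)` equals `q ^ (n(n-1))`, which is the square of `q ^ (n(n-1)/2)`,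
the order of a Sylow `p`-subgroup of `GL_n(F_q)`. -/
theorem card_unipotent_GL (q n : ℕ) (hn : 1 ≤ n)
    (K : Type*) [Field K] [Fintype K] (hK : Fintype.card K = q) :
    Nat.card {u : (Matrix (Fin n) (Fin n) K)ˣ //
        ((u : Matrix (Fin n) (Fin n) K) - 1) ^ n = 0} = q ^ (n * (n - 1)) ∧
      q ^ (n * (n - 1)) = (q ^ (n * (n - 1) / 2)) ^ 2 :=
  card_unipotent_GL_general q n K hK
end

section
/- (Hermitian/Fermat curve point count) Let q be a prime power. The number of points [x : y : z] in the projective plane over F_{q²} satisfying x^{q+1} + y^{q+1} + z^{q+1} = 0 equals q³ + 1. -/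
/-!
Write `N z = z ^ (q + 1)`. Since `|K| = q²`, the number `q` is a power of the characteristic, so
`x ↦ x ^ q` is a ring endomorphism of `K`, and `N` takes values in its fixed points. As `Kˣ` is
cyclic of order `(q - 1) (q + 1)`, every fixed point `a ≠ 0` has exactly `q + 1` preimages under
`N`. Hence for a fixed point `c` the equation `c + N z = 0` has `1` or `q + 1` solutions according
as `c = 0` or not; summing over `(x, y)` gives `(q² - 1) (q³ + 1) + 1` solutions of
`N x + N y + N z = 0` in `K³`. Discarding `0` and dividing by `|Kˣ| = q² - 1` leaves `q³ + 1`
projective points.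
-/

open Finset

theorem IsCyclic.card_pow_eq_of_pow_eq_one {G : Type*} [CommGroup G] [IsCyclic G] [Fintype G]
    [DecidableEq G] {m d : ℕ} (hG : Nat.card G = m * d) {a : G} (ha : a ^ m = 1) :
    #{g : G | g ^ d = a} = d := by
  have hd : d ≠ 0 := by
    rintro rfl
    simp at hG
  have hrange : (powMonoidHom d : G →* G).range = (powMonoidHom m).ker := by
    refine Subgroup.eq_of_le_of_card_ge ?_ ?_
    · rintro _ ⟨g, rfl⟩
      rw [MonoidHom.mem_ker, powMonoidHom_apply, powMonoidHom_apply, ← pow_mul, mul_comm,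
        ← hG, pow_card_eq_one']
    · rw [IsCyclic.card_powMonoidHom_range, IsCyclic.card_powMonoidHom_ker, hG,
        Nat.gcd_mul_left_left, Nat.gcd_mul_right_left, Nat.mul_div_cancel _ (Nat.pos_of_ne_zero hd)]
  have ha : a ∈ Set.range (powMonoidHom d : G →* G) := by
    rw [← MonoidHom.coe_range, hrange]
    exact ha
  calc #{g : G | g ^ d = a} = #{g : G | g ^ d = 1} :=
        MonoidHom.card_fiber_eq_of_mem_range (powMonoidHom d) ha ⟨1, one_pow d⟩
    _ = Nat.card (powMonoidHom d : G →* G).ker := by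
        rw [Nat.card_eq_fintype_card, ← Fintype.card_subtype]
        exact Fintype.card_congr (Equiv.refl _)
    _ = d := by rw [IsCyclic.card_powMonoidHom_ker, hG, Nat.gcd_mul_left_left]

theorem Projectivization.card_subtype_rep_mul_card_units {k V : Type*} [DivisionRing k]
    [AddCommGroup V] [Module k V] (p : V → Prop) (hp : ∀ (c : kˣ) (v : V), p v → p (c • v)) :
    Nat.card {P : Projectivization k V // p P.rep} * Nat.card kˣ =
      Nat.card {v : V // v ≠ 0 ∧ p v} := by
  let f : {P : Projectivization k V // p P.rep} × kˣ → {v : V // v ≠ 0 ∧ p v} := fun Pc =>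
    ⟨Pc.2 • Pc.1.1.rep, (smul_ne_zero_iff_ne _).2 Pc.1.1.rep_nonzero, hp _ _ Pc.1.2⟩
  have hf : Function.Bijective f := by
    constructor
    · rintro ⟨⟨P, hP⟩, c⟩ ⟨⟨Q, hQ⟩, d⟩ h
      have h : c • P.rep = d • Q.rep := congrArg Subtype.val h
      obtain rfl : P = Q := by
        rw [← P.mk_rep, ← Q.mk_rep, mk_eq_mk_iff]
        exact ⟨c⁻¹ * d, by rw [mul_smul, ← h, inv_smul_smul]⟩
      obtain rfl : c = d := Units.ext <| smul_left_injective k P.rep_nonzero <| by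
        simpa only [Units.smul_def] using h
      rfl
    · rintro ⟨v, hv, hpv⟩
      obtain ⟨a, ha⟩ := exists_smul_eq_mk_rep k v hv
      exact ⟨(⟨mk k v hv, ha ▸ hp a v hpv⟩, a⁻¹), Subtype.ext <| by simp [f, ← ha]⟩
  rw [← Nat.card_prod, Nat.card_congr (Equiv.ofBijective f hf)]

def finThreeArrowEquiv (α : Type*) : (Fin 3 → α) ≃ (α × α) × α where
  toFun v := ((v 0, v 1), v 2)
  invFun t := ![t.1.1, t.1.2, t.2]
  left_inv v := by ext i; fin_cases i <;> rfl
  right_inv _ := rfl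

namespace FiniteField

variable {K : Type*} [Field K] [Fintype K] {q : ℕ}

theorem exists_ringHom_eq_pow_of_card_eq_sq (hK : Fintype.card K = q ^ 2) :
    ∃ σ : K →+* K, ∀ x, σ x = x ^ q := by
  obtain ⟨n, hp, hcard⟩ := FiniteField.card K (ringChar K)
  have : Fact (ringChar K).Prime := ⟨hp⟩
  obtain ⟨k, -, rfl⟩ := (Nat.dvd_prime_pow hp).1 (hcard ▸ hK ▸ dvd_pow_self q two_ne_zero)
  exact ⟨iterateFrobenius K (ringChar K) k, fun _ => rfl⟩

theorem pow_add_one_pow_eq_self (hK : Fintype.card K = q ^ 2) (z : K) :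
    (z ^ (q + 1)) ^ q = z ^ (q + 1) := by
  rw [← pow_mul, add_mul, one_mul, pow_add, ← sq, ← hK, FiniteField.pow_card, ← pow_succ']

section DecidableEq

variable [DecidableEq K]

theorem card_pow_eq_of_pow_eq_self (hK : Fintype.card K = q ^ 2) {a : K} (ha : a ^ q = a) :
    #{z : K | z ^ (q + 1) = a} = if a = 0 then 1 else q + 1 := by
  split_ifs with ha0
  · simp [ha0, pow_eq_zero_iff, filter_eq']
  have hq : q ≠ 0 := by
    rintro rfl
    simp at hK
  have hu : Units.mk0 a ha0 ^ (q - 1) = 1 := by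
    ext
    refine mul_right_cancel₀ ha0 ?_
    rw [Units.val_pow_eq_pow_val, Units.val_mk0, Units.val_one, one_mul, ← pow_succ,
      Nat.sub_add_cancel (Nat.one_le_iff_ne_zero.2 hq), ha]
  have hKu : Nat.card Kˣ = (q - 1) * (q + 1) := by
    rw [Nat.card_eq_fintype_card, Fintype.card_units, hK, mul_comm, ← Nat.sq_sub_sq, one_pow]
  calc #{z : K | z ^ (q + 1) = a} = #{u : Kˣ | u ^ (q + 1) = Units.mk0 a ha0} := by
        refine (card_nbij (↑) (fun u hu => ?_) (fun u _ v _ h => Units.ext h) (fun z hz => ?_)).symm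
        · simpa [Units.ext_iff] using hu
        · have hz0 : z ≠ 0 := by
            rintro rfl
            simp at hz
            exact ha0 hz.symm
          exact ⟨Units.mk0 z hz0, by simpa [Units.ext_iff] using hz, rfl⟩
    _ = q + 1 := IsCyclic.card_pow_eq_of_pow_eq_one hKu hu

theorem card_add_pow_eq_zero (hK : Fintype.card K = q ^ 2) {c : K} (hc : c ^ q = c) :
    #{z : K | c + z ^ (q + 1) = 0} = if c = 0 then 1 else q + 1 := by
  obtain ⟨σ, hσ⟩ := exists_ringHom_eq_pow_of_card_eq_sq hK
  have hneg : (-c) ^ q = -c := by rw [← hσ, map_neg, hσ, hc]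
  simp only [add_eq_zero_iff_eq_neg', card_pow_eq_of_pow_eq_self hK hneg, neg_eq_zero]

theorem card_pow_add_pow_eq_zero (hK : Fintype.card K = q ^ 2) :
    #{p : K × K | p.1 ^ (q + 1) + p.2 ^ (q + 1) = 0} = 1 + (q ^ 2 - 1) * (q + 1) := by
  calc #{p : K × K | p.1 ^ (q + 1) + p.2 ^ (q + 1) = 0}
      = ∑ x : K, #{y : K | x ^ (q + 1) + y ^ (q + 1) = 0} := by
        simp only [card_filter, Fintype.sum_prod_type]
    _ = ∑ x : K, if x = 0 then 1 else q + 1 := by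
        refine sum_congr rfl fun x _ => ?_
        simp only [card_add_pow_eq_zero hK (pow_add_one_pow_eq_self hK x),
          pow_eq_zero_iff q.succ_ne_zero]
    _ = 1 + (q ^ 2 - 1) * (q + 1) := by
        rw [sum_ite, sum_const, sum_const, filter_eq', filter_ne', card_erase_of_mem (mem_univ _)]
        simp [hK]

theorem card_pow_add_pow_add_pow_eq_zero (hK : Fintype.card K = q ^ 2) :
    #{t : (K × K) × K | t.1.1 ^ (q + 1) + t.1.2 ^ (q + 1) + t.2 ^ (q + 1) = 0} =
      (q ^ 2 - 1) * (q ^ 3 + 1) + 1 := by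
  obtain ⟨σ, hσ⟩ := exists_ringHom_eq_pow_of_card_eq_sq hK
  have hfix (p : K × K) :
      (p.1 ^ (q + 1) + p.2 ^ (q + 1)) ^ q = p.1 ^ (q + 1) + p.2 ^ (q + 1) := by
    rw [← hσ, map_add, hσ, hσ, pow_add_one_pow_eq_self hK, pow_add_one_pow_eq_self hK]
  set Z := #{p : K × K | p.1 ^ (q + 1) + p.2 ^ (q + 1) = 0}
  have hZ : Z = 1 + (q ^ 2 - 1) * (q + 1) := card_pow_add_pow_eq_zero hK
  have hZc : Z + #{p : K × K | ¬p.1 ^ (q + 1) + p.2 ^ (q + 1) = 0} = q ^ 4 := by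
    rw [card_filter_add_card_filter_not, card_univ, Fintype.card_prod, hK]
    ring
  calc #{t : (K × K) × K | t.1.1 ^ (q + 1) + t.1.2 ^ (q + 1) + t.2 ^ (q + 1) = 0}
      = ∑ p : K × K, #{z : K | p.1 ^ (q + 1) + p.2 ^ (q + 1) + z ^ (q + 1) = 0} := by
        rw [card_filter, Fintype.sum_prod_type]
        simp only [card_filter]
    _ = ∑ p : K × K, if p.1 ^ (q + 1) + p.2 ^ (q + 1) = 0 then 1 else q + 1 :=
        sum_congr rfl fun p _ => card_add_pow_eq_zero hK (hfix p)
    _ = Z + #{p : K × K | ¬p.1 ^ (q + 1) + p.2 ^ (q + 1) = 0} * (q + 1) := by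
        rw [sum_ite, sum_const, sum_const, smul_eq_mul, smul_eq_mul, mul_one]
    _ = (q ^ 2 - 1) * (q ^ 3 + 1) + 1 := by
        have hq : 1 ≤ q ^ 2 := hK ▸ Fintype.card_pos
        zify [hq] at hZ hZc ⊢
        linear_combination (q + 1 : ℤ) * hZc - (q : ℤ) * hZ

end DecidableEq

theorem card_ne_zero_and_pow_add_pow_add_pow_eq_zero (hK : Fintype.card K = q ^ 2) :
    Nat.card {v : Fin 3 → K // v ≠ 0 ∧ v 0 ^ (q + 1) + v 1 ^ (q + 1) + v 2 ^ (q + 1) = 0} =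
      (q ^ 2 - 1) * (q ^ 3 + 1) := by
  classical
  have hcone : #{v : Fin 3 → K | v 0 ^ (q + 1) + v 1 ^ (q + 1) + v 2 ^ (q + 1) = 0} =
      (q ^ 2 - 1) * (q ^ 3 + 1) + 1 := by
    rw [← card_pow_add_pow_add_pow_eq_zero hK]
    exact card_equiv (finThreeArrowEquiv K) fun v => by
      simp only [mem_filter, mem_univ, true_and]; rfl
  have hzero : (0 : Fin 3 → K) ∈
      ({v | v 0 ^ (q + 1) + v 1 ^ (q + 1) + v 2 ^ (q + 1) = 0} : Finset (Fin 3 → K)) := by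
    simp
  calc Nat.card {v : Fin 3 → K // v ≠ 0 ∧ v 0 ^ (q + 1) + v 1 ^ (q + 1) + v 2 ^ (q + 1) = 0}
      = #(({v | v 0 ^ (q + 1) + v 1 ^ (q + 1) + v 2 ^ (q + 1) = 0} :
          Finset (Fin 3 → K)).erase 0) := by
        rw [Nat.card_eq_fintype_card, Fintype.card_subtype]
        congr 1
        ext v
        simp
    _ = (q ^ 2 - 1) * (q ^ 3 + 1) := by rw [card_erase_of_mem hzero, hcone, Nat.add_sub_cancel]

end FiniteField

theorem card_hermitian_curve_general (q : ℕ)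
    (K : Type*) [Field K] [Fintype K] (hK : Fintype.card K = q ^ 2) :
    Nat.card {P : Projectivization K (Fin 3 → K) //
        (P.rep 0) ^ (q + 1) + (P.rep 1) ^ (q + 1) + (P.rep 2) ^ (q + 1) = 0} =
      q ^ 3 + 1 := by
  classical
  have hunits : Nat.card Kˣ = q ^ 2 - 1 := by
    rw [Nat.card_eq_fintype_card, Fintype.card_units, hK]
  have hpos : 0 < q ^ 2 - 1 := Nat.sub_pos_of_lt (hK ▸ Fintype.one_lt_card)
  have hcone := Projectivization.card_subtype_rep_mul_card_units (k := K)
    (fun v : Fin 3 → K => v 0 ^ (q + 1) + v 1 ^ (q + 1) + v 2 ^ (q + 1) = 0)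
    fun c v hv => by
      simp only [Units.smul_def, Pi.smul_apply, smul_eq_mul, mul_pow, ← mul_add, hv, mul_zero]
  rw [hunits, FiniteField.card_ne_zero_and_pow_add_pow_add_pow_eq_zero hK, mul_comm] at hcone
  exact Nat.eq_of_mul_eq_mul_left hpos hcone

/-- **Hermitian/Fermat curve point count.** The number of points
`[x : y : z]` of the projective plane over `F_{q²}` with
`x^{q+1} + y^{q+1} + z^{q+1} = 0` equals `q³ + 1`. -/
theorem card_hermitian_curve (q : ℕ) (hq : IsPrimePow q)
    (K : Type*) [Field K] [Fintype K] (hK : Fintype.card K = q ^ 2) :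
    Nat.card {P : Projectivization K (Fin 3 → K) //
        (P.rep 0) ^ (q + 1) + (P.rep 1) ^ (q + 1) + (P.rep 2) ^ (q + 1) = 0} =
      q ^ 3 + 1 :=
  card_hermitian_curve_general q K hK
end
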